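/- For every a > 0 and M > 0 there exists a constant C > 0, depending only on d, α, a and M, such that for every m ∈ (0, M] and every r > a, j^m(r) ≤ C · j^m(r + a). -/

import Mathlib

open MeasureTheory Real Set

/-- `ψ(r) = 2^{-(d+α)} Γ((d+α)/2)^{-1} ∫_0^∞ s^{(d+α)/2-1} e^{-s/4 - r²/s} ds`. -/
noncomputable def psi (d : ℕ) (α r : ℝ) : ℝ :=
  2 ^ (-((d : ℝ) + α)) * (Real.Gamma (((d : ℝ) + α) / 2))⁻¹ *
    ∫ s in Set.Ioi (0 : ℝ), s ^ (((d : ℝ) + α) / 2 - 1) * Real.exp (-(s / 4) - r ^ 2 / s)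

/-- `A(d, -α) = α 2^{α-1} π^{-d/2} Γ((d+α)/2) Γ(1-α/2)^{-1}`. -/
noncomputable def Aconst (d : ℕ) (α : ℝ) : ℝ :=
  α * 2 ^ (α - 1) * Real.pi ^ (-(d : ℝ) / 2) * Real.Gamma (((d : ℝ) + α) / 2) /
    Real.Gamma (1 - α / 2)

/-- `j^m(r) = A(d,-α) r^{-d-α} ψ(m^{1/α} r)`, the Lévy density of the relativistic
α-stable process with weight `m`. -/
noncomputable def jm (d : ℕ) (α m r : ℝ) : ℝ :=
  Aconst d α * r ^ (-(d : ℝ) - α) * psi d α (m ^ (1 / α) * r)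

/-!
With `ν = (d+α)/2`, `ψ` is a positive multiple of `G(x) = ∫_0^∞ s^{ν-1} e^{-s/4 - x²/s} ds`.
The substitution `s ↦ 4x²/s` exchanges `s/4` and `x²/s` and only shrinks the integrand when it
maps `(2x, ∞)` onto `(0, 2x)`, so `G(x)` is at most twice its tail over `s > 2x`. On that tail,
replacing `x` by `x + B` with `B ≤ x` lowers the exponent by at most `2B`, whence
`G(x) ≤ 2e^{2B} G(x+B)` for `x ≥ B`; for `x ≤ B` it suffices that `G` is decreasing.
For `m ≤ M` the shift `m^{1/α} a` is at most `B = M^{1/α} a`, and `r + a < 2r` controls the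
factor `r^{-d-α}`.
-/

noncomputable def psiIntegrand (ν x s : ℝ) : ℝ :=
  s ^ (ν - 1) * Real.exp (-(s / 4) - x ^ 2 / s)

noncomputable def psiIntegral (ν x : ℝ) : ℝ :=
  ∫ s in Ioi (0 : ℝ), psiIntegrand ν x s

section psiIntegral

variable {ν : ℝ}

lemma psiIntegrand_pos (x : ℝ) {s : ℝ} (hs : 0 < s) : 0 < psiIntegrand ν x s :=
  mul_pos (rpow_pos_of_pos hs _) (exp_pos _)

lemma continuousOn_psiIntegrand (ν x : ℝ) : ContinuousOn (psiIntegrand ν x) (Ioi 0) := by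
  unfold psiIntegrand
  exact (continuousOn_id.rpow_const fun s hs => Or.inl (ne_of_gt hs)).mul <|
    continuous_exp.comp_continuousOn <|
      (continuousOn_id.div_const 4).neg.sub
        (continuousOn_const.div continuousOn_id fun s hs => ne_of_gt hs)

lemma integrableOn_psiIntegrand (hν : 0 < ν) (x : ℝ) :
    IntegrableOn (psiIntegrand ν x) (Ioi 0) := by
  refine Integrable.mono' (integrableOn_rpow_mul_exp_neg_mul_rpow (s := ν - 1) (by linarith)
    zero_lt_one (by norm_num : (0 : ℝ) < 4⁻¹))
    ((continuousOn_psiIntegrand ν x).aestronglyMeasurable measurableSet_Ioi) ?_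
  rw [ae_restrict_iff' measurableSet_Ioi]
  filter_upwards with s (hs : 0 < s)
  rw [norm_of_nonneg (psiIntegrand_pos x hs).le, psiIntegrand, rpow_one]
  gcongr
  have : 0 ≤ x ^ 2 / s := by positivity
  linarith

lemma psiIntegral_pos (hν : 0 < ν) (x : ℝ) : 0 < psiIntegral ν x := by
  have hsupp : Function.support (psiIntegrand ν x) ∩ Ioi 0 = Ioi 0 :=
    inter_eq_right.2 fun s hs => (psiIntegrand_pos x hs).ne'
  rw [psiIntegral, setIntegral_pos_iff_support_of_nonneg_ae _ (integrableOn_psiIntegrand hν x),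
    hsupp, volume_Ioi]
  · exact ENNReal.zero_lt_top
  · exact (ae_restrict_iff' measurableSet_Ioi).2
      (ae_of_all _ fun s hs => (psiIntegrand_pos x hs).le)

lemma antitoneOn_psiIntegral (hν : 0 < ν) : AntitoneOn (psiIntegral ν) (Ici 0) := by
  intro x (hx : 0 ≤ x) y _ hxy
  refine setIntegral_mono_on (integrableOn_psiIntegrand hν y) (integrableOn_psiIntegrand hν x)
    measurableSet_Ioi fun s (hs : 0 < s) => ?_
  unfold psiIntegrand
  gcongr

/-- `|-(4x²)/u²|` is the Jacobian of the substitution `u ↦ 4x²/u`. -/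
lemma psiIntegrand_inv_mul_le {x u : ℝ} (hν : 0 < ν) (hx : 0 < x) (hu : 2 * x < u) :
    |-(4 * x ^ 2) / u ^ 2| * psiIntegrand ν x (4 * x ^ 2 / u) ≤ psiIntegrand ν x u := by
  have hu0 : 0 < u := by linarith
  set q := 4 * x ^ 2 / u ^ 2 with hq
  have hq0 : 0 < q := by positivity
  have hq1 : q ≤ 1 := by rw [hq, div_le_one (by positivity)]; nlinarith
  have habs : |-(4 * x ^ 2) / u ^ 2| = q := by rw [neg_div, abs_neg, abs_of_pos hq0]
  have hsub : 4 * x ^ 2 / u = q * u := by rw [hq]; field_simp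
  have hexp : -(4 * x ^ 2 / u / 4) - x ^ 2 / (4 * x ^ 2 / u) = -(u / 4) - x ^ 2 / u := by
    field_simp; ring
  rw [habs, psiIntegrand, psiIntegrand, hexp, ← mul_assoc, hsub, mul_rpow hq0.le hu0.le,
    ← mul_assoc, ← rpow_one_add' hq0.le (by linarith), add_sub_cancel]
  exact mul_le_mul_of_nonneg_right
    (mul_le_of_le_one_left (rpow_nonneg hu0.le _) (rpow_le_one hq0.le hq1 hν.le)) (exp_pos _).le

lemma setIntegral_Ioo_psiIntegrand_le (hν : 0 < ν) {x : ℝ} (hx : 0 < x) :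
    ∫ s in Ioo 0 (2 * x), psiIntegrand ν x s ≤ ∫ s in Ioi (2 * x), psiIntegrand ν x s := by
  have himage : (fun u : ℝ => 4 * x ^ 2 / u) '' Ioi (2 * x) = Ioo 0 (2 * x) := by
    ext s
    constructor
    · rintro ⟨u, (hu : 2 * x < u), rfl⟩
      have hu0 : 0 < u := by linarith
      refine ⟨by positivity, ?_⟩
      rw [div_lt_iff₀ (by linarith)]
      nlinarith
    · rintro ⟨hs0, hsx⟩
      refine ⟨4 * x ^ 2 / s, ?_, by field_simp⟩
      show 2 * x < 4 * x ^ 2 / s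
      rw [lt_div_iff₀ hs0]
      nlinarith
  have hderiv : ∀ u ∈ Ioi (2 * x),
      HasDerivWithinAt (fun u : ℝ => 4 * x ^ 2 / u) (-(4 * x ^ 2) / u ^ 2) (Ioi (2 * x)) u := by
    intro u (hu : 2 * x < u)
    simp only [div_eq_mul_inv]
    refine ((hasDerivAt_inv (by linarith : u ≠ 0)).const_mul
      (4 * x ^ 2)).hasDerivWithinAt.congr_deriv ?_
    ring
  have hinj : InjOn (fun u : ℝ => 4 * x ^ 2 / u) (Ioi (2 * x)) := by
    intro u (hu : 2 * x < u) v (hv : 2 * x < v) huv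
    have : (4 * x ^ 2) ≠ 0 := by positivity
    simpa [div_eq_div_iff, this, (by linarith : u ≠ 0), (by linarith : v ≠ 0)] using huv.symm
  rw [← himage, integral_image_eq_integral_abs_deriv_smul measurableSet_Ioi hderiv hinj]
  refine integral_mono_of_nonneg ?_
    ((integrableOn_psiIntegrand hν x).mono_set (Ioi_subset_Ioi (by linarith))) ?_
  · exact (ae_restrict_iff' measurableSet_Ioi).2 (ae_of_all _ fun u (hu : 2 * x < u) =>
      smul_nonneg (abs_nonneg _) (psiIntegrand_pos x (div_pos (by positivity) (by linarith))).le)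
  · exact (ae_restrict_iff' measurableSet_Ioi).2 (ae_of_all _ fun u hu =>
      psiIntegrand_inv_mul_le hν hx hu)

lemma psiIntegral_le_two_mul_setIntegral_Ioi (hν : 0 < ν) {x : ℝ} (hx : 0 < x) :
    psiIntegral ν x ≤ 2 * ∫ s in Ioi (2 * x), psiIntegrand ν x s := by
  have hint := integrableOn_psiIntegrand hν x
  have hsplit : psiIntegral ν x =
      (∫ s in Ioo 0 (2 * x), psiIntegrand ν x s) + ∫ s in Ici (2 * x), psiIntegrand ν x s := by
    rw [psiIntegral, ← Ioo_union_Ici_eq_Ioi (by linarith : (0 : ℝ) < 2 * x)]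
    exact setIntegral_union ((Iio_disjoint_Ici le_rfl).mono_left Ioo_subset_Iio_self)
      measurableSet_Ici (hint.mono_set Ioo_subset_Ioi_self)
      (hint.mono_set (Ici_subset_Ioi.2 (by linarith)))
  rw [hsplit, integral_Ici_eq_integral_Ioi]
  linarith [setIntegral_Ioo_psiIntegrand_le hν hx]

lemma psiIntegrand_le_exp_mul_psiIntegrand_add {x B s : ℝ} (hB : 0 ≤ B) (hBx : B ≤ x)
    (hs : 2 * x < s) : psiIntegrand ν x s ≤ exp (2 * B) * psiIntegrand ν (x + B) s := by
  have hs0 : 0 < s := by linarith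
  have hquot : (x + B) ^ 2 / s - x ^ 2 / s ≤ 2 * B := by
    rw [div_sub_div_same, div_le_iff₀ hs0]
    nlinarith
  rw [psiIntegrand, psiIntegrand, mul_left_comm, ← exp_add]
  gcongr
  linarith

lemma psiIntegral_le_exp_mul_psiIntegral_add (hν : 0 < ν) {x B : ℝ} (hB : 0 ≤ B) (hBx : B ≤ x)
    (hx : 0 < x) : psiIntegral ν x ≤ 2 * exp (2 * B) * psiIntegral ν (x + B) := by
  have hint := integrableOn_psiIntegrand hν (x + B)
  calc psiIntegral ν x ≤ 2 * ∫ s in Ioi (2 * x), psiIntegrand ν x s :=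
        psiIntegral_le_two_mul_setIntegral_Ioi hν hx
    _ ≤ 2 * ∫ s in Ioi (2 * x), exp (2 * B) * psiIntegrand ν (x + B) s := by
        refine mul_le_mul_of_nonneg_left (setIntegral_mono_on
          ((integrableOn_psiIntegrand hν x).mono_set (Ioi_subset_Ioi (by linarith)))
          ((hint.mono_set (Ioi_subset_Ioi (by linarith))).const_mul _) measurableSet_Ioi
          fun s hs => psiIntegrand_le_exp_mul_psiIntegrand_add hB hBx hs) two_pos.le
    _ ≤ 2 * exp (2 * B) * psiIntegral ν (x + B) := by
        rw [integral_const_mul, mul_assoc]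
        gcongr
        exact setIntegral_mono_set hint
          ((ae_restrict_iff' measurableSet_Ioi).2
            (ae_of_all _ fun s hs => (psiIntegrand_pos _ hs).le))
          (Ioi_subset_Ioi (by linarith)).eventuallyLE

lemma exists_psiIntegral_le_mul_psiIntegral_add (hν : 0 < ν) {B : ℝ} (hB : 0 ≤ B) :
    ∃ C, 0 < C ∧ ∀ x, 0 ≤ x → psiIntegral ν x ≤ C * psiIntegral ν (x + B) := by
  have hG := psiIntegral_pos hν (2 * B)
  refine ⟨max (2 * exp (2 * B)) (psiIntegral ν 0 / psiIntegral ν (2 * B)), by positivity,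
    fun x hx => ?_⟩
  rcases le_or_gt x B with hxB | hBx
  · have hanti := antitoneOn_psiIntegral hν
    calc psiIntegral ν x ≤ psiIntegral ν 0 := hanti self_mem_Ici hx hx
      _ = psiIntegral ν 0 / psiIntegral ν (2 * B) * psiIntegral ν (2 * B) := by field_simp
      _ ≤ _ * psiIntegral ν (x + B) := by
        gcongr
        · exact le_max_right _ _
        · exact hanti (by simp; linarith) (by simp; linarith) (by linarith)
  · calc psiIntegral ν x ≤ 2 * exp (2 * B) * psiIntegral ν (x + B) :=
          psiIntegral_le_exp_mul_psiIntegral_add hν hB hBx.le (by linarith)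
      _ ≤ _ := mul_le_mul_of_nonneg_right (le_max_left _ _) (psiIntegral_pos hν _).le

end psiIntegral

lemma psi_eq_mul_psiIntegral (d : ℕ) (α y : ℝ) :
    psi d α y = 2 ^ (-((d : ℝ) + α)) * (Gamma (((d : ℝ) + α) / 2))⁻¹ *
      psiIntegral (((d : ℝ) + α) / 2) y :=
  rfl

lemma Aconst_pos (d : ℕ) {α : ℝ} (hα : α ∈ Ioo (0 : ℝ) 2) : 0 < Aconst d α := by
  obtain ⟨hα0, hα2⟩ := hα
  have := Gamma_pos_of_pos (by linarith : 0 < 1 - α / 2)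
  have := Gamma_pos_of_pos (by positivity : 0 < ((d : ℝ) + α) / 2)
  unfold Aconst
  positivity

lemma rpow_neg_le_two_rpow_mul_rpow_neg {p r s : ℝ} (hp : 0 ≤ p) (hs : 0 < s) (hsr : s ≤ 2 * r) :
    r ^ (-p) ≤ 2 ^ p * s ^ (-p) := by
  have hr : 0 < r := by linarith
  calc r ^ (-p) = 2 ^ p * (2 * r) ^ (-p) := by
        rw [mul_rpow zero_le_two hr.le, ← mul_assoc, ← rpow_add two_pos, add_neg_cancel, rpow_zero,
          one_mul]
    _ ≤ 2 ^ p * s ^ (-p) :=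
        mul_le_mul_of_nonneg_left (rpow_le_rpow_of_nonpos hs hsr (neg_nonpos.2 hp)) (by positivity)

theorem jm_shift_general (d : ℕ) (α : ℝ) (hα : α ∈ Set.Ioo (0:ℝ) 2)
    (a M : ℝ) (ha : 0 < a) (hM : 0 < M) :
    ∃ C : ℝ, 0 < C ∧ ∀ m ∈ Set.Ioc (0:ℝ) M, ∀ r : ℝ, a < r →
      jm d α m r ≤ C * jm d α m (r + a) := by
  have hα0 := hα.1
  set ν := ((d : ℝ) + α) / 2
  have hν : 0 < ν := by positivity
  obtain ⟨C, hC, hshift⟩ :=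
    exists_psiIntegral_le_mul_psiIntegral_add hν (by positivity : 0 ≤ M ^ (1 / α) * a)
  refine ⟨2 ^ ((d : ℝ) + α) * C, by positivity, fun m ⟨hm0, hmM⟩ r hr => ?_⟩
  have hr0 : 0 < r := ha.trans hr
  set t := m ^ (1 / α)
  have hpow : r ^ (-(d : ℝ) - α) ≤ 2 ^ ((d : ℝ) + α) * (r + a) ^ (-(d : ℝ) - α) := by
    rw [show -(d : ℝ) - α = -((d : ℝ) + α) by ring]
    exact rpow_neg_le_two_rpow_mul_rpow_neg (by positivity) (by linarith) (by linarith)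
  have hG : psiIntegral ν (t * r) ≤ C * psiIntegral ν (t * (r + a)) := by
    have hta : t * a ≤ M ^ (1 / α) * a := by
      gcongr
      exact rpow_le_rpow hm0.le hmM (by positivity)
    calc psiIntegral ν (t * r) ≤ C * psiIntegral ν (t * r + M ^ (1 / α) * a) :=
          hshift _ (by positivity)
      _ ≤ C * psiIntegral ν (t * (r + a)) := by
          gcongr
          exact antitoneOn_psiIntegral hν (mem_Ici.2 (by positivity)) (mem_Ici.2 (by positivity))
            (by linarith)
  have hK : 0 < Aconst d α * 2 ^ (-((d : ℝ) + α)) * (Gamma ν)⁻¹ := by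
    have := Aconst_pos d hα
    have := Gamma_pos_of_pos hν
    positivity
  calc jm d α m r
      = Aconst d α * 2 ^ (-((d : ℝ) + α)) * (Gamma ν)⁻¹ *
          (r ^ (-(d : ℝ) - α) * psiIntegral ν (t * r)) := by
        rw [jm, psi_eq_mul_psiIntegral]; ring
    _ ≤ Aconst d α * 2 ^ (-((d : ℝ) + α)) * (Gamma ν)⁻¹ *
          (2 ^ ((d : ℝ) + α) * (r + a) ^ (-(d : ℝ) - α) * (C * psiIntegral ν (t * (r + a)))) :=
        mul_le_mul_of_nonneg_left
          (mul_le_mul hpow hG (psiIntegral_pos hν _).le (by positivity)) hK.le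
    _ = 2 ^ ((d : ℝ) + α) * C * jm d α m (r + a) := by
        rw [jm, psi_eq_mul_psiIntegral]; ring

/-- For every `a > 0` and `M > 0` there is `C = C(d,α,a,M) > 0` with
`j^m(r) ≤ C j^m(r + a)` for every `m ∈ (0,M]` and `r > a`. -/
theorem jm_shift (d : ℕ) (hd : 1 ≤ d) (α : ℝ) (hα : α ∈ Set.Ioo (0:ℝ) 2)
    (a M : ℝ) (ha : 0 < a) (hM : 0 < M) :
    ∃ C : ℝ, 0 < C ∧ ∀ m ∈ Set.Ioc (0:ℝ) M, ∀ r : ℝ, a < r →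
      jm d α m r ≤ C * jm d α m (r + a) :=
  jm_shift_general d α hα a M ha hM
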